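/- arXiv:2207.06125 — 3 statements merged into one kernel-verified Lean document; each statement's English description precedes it below -/
import Mathlib

section
/- Let δ > 0, let γ : [0,δ]² → (0,∞) be continuous, set γ₀ := γ(0,0), let σ > 0 and 0 < ε ≤ δ. Suppose V : [0,ε) → [0,δ] is continuous with V(0) = 0, V(u) > 0 for u ∈ (0,ε), V is differentiable on (0,ε), and V'(u) = σ − (u/V(u))·γ(u,V(u)) for all u ∈ (0,ε). Then σ ≥ 2√γ₀, the limit w := lim_{u→0⁺} V(u)/u exists, and w² − σ·w + γ₀ = 0. -/
open Set Filter Topology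
open scoped ENNReal

noncomputable section

/-- The strip `Ω` between `-ω` and `ω` over `[0,1]`:
`Ω = {(u,s) : u ∈ [0,1], -ω(u) < s < ω(u)}`. -/
def OmegaSet (ω : ℝ → ℝ≥0∞) : Set (ℝ × ℝ) :=
  {p | p.1 ∈ Set.Icc (0:ℝ) 1 ∧ ENNReal.ofReal |p.2| < ω p.1}

/-- The set `𝒟` between `a₋ = -a₊` and `a₊` over `[0,1]`. -/
def DSet (aplus : ℝ → ℝ≥0∞) : Set (ℝ × ℝ) :=
  {p | p.1 ∈ Set.Icc (0:ℝ) 1 ∧ ENNReal.ofReal |p.2| < aplus p.1}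

/-- Standing data and hypotheses: a lower semicontinuous width `ω : [0,1] → (0,∞]`,
a regular flux `a` on `Ω` (odd in `s`, C¹, with `∂a/∂s > 0`), the maximal fluxes
`a₊(u) = lim_{s→ω(u)⁻} a(u,s)` (equivalently, the supremum over `0 < s < ω(u)`),
which are `+∞` whenever `ω(u) < ∞`, the partial inverse `g` on `𝒟` defined by
`a(u, g(u,v)) = v`, and a logistic-type reaction term `f`. -/
structure FluxData where
  ω : ℝ → ℝ≥0∞
  a : ℝ → ℝ → ℝ
  aplus : ℝ → ℝ≥0∞
  g : ℝ → ℝ → ℝ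
  f : ℝ → ℝ
  ω_pos : ∀ u ∈ Set.Icc (0:ℝ) 1, 0 < ω u
  ω_lsc : LowerSemicontinuousOn ω (Set.Icc (0:ℝ) 1)
  a_odd : ∀ u s, (u, s) ∈ OmegaSet ω → a u (-s) = - a u s
  a_C1 : ContDiffOn ℝ 1 (fun p : ℝ × ℝ => a p.1 p.2) (OmegaSet ω)
  a_deriv_pos : ∀ u s, (u, s) ∈ OmegaSet ω → ∃ d : ℝ, 0 < d ∧ HasDerivAt (a u) d s
  aplus_def : ∀ u ∈ Set.Icc (0:ℝ) 1,
      aplus u = ⨆ s ∈ {s : ℝ | 0 < s ∧ (u, s) ∈ OmegaSet ω}, ENNReal.ofReal (a u s)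
  aplus_pos : ∀ u ∈ Set.Icc (0:ℝ) 1, 0 < aplus u
  aplus_top : ∀ u ∈ Set.Icc (0:ℝ) 1, ω u < ⊤ → aplus u = ⊤
  g_spec : ∀ p ∈ DSet aplus, (p.1, g p.1 p.2) ∈ OmegaSet ω ∧ a p.1 (g p.1 p.2) = p.2
  f_C1 : ContDiffOn ℝ 1 f (Set.Icc (0:ℝ) 1)
  f_zero : f 0 = 0
  f_one : f 1 = 0
  f_pos : ∀ u ∈ Set.Ioo (0:ℝ) 1, 0 < f u

/-- A classic traveling wave of `u_t = (b(u,u_x))_x + f(u)` moving at speed `σ`: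
a C² increasing profile `u` with values in `(0,1)`, `0 < u' < ω(u)`, connecting
`0` at `-∞` to `1` at `+∞`, such that `ξ ↦ b(u(ξ),u'(ξ))` is differentiable and
`(b(u,u'))' - σ u' + f(u) = 0`. -/
def IsClassicTW (F : FluxData) (b : ℝ → ℝ → ℝ) (σ : ℝ) (u : ℝ → ℝ) : Prop :=
  ContDiff ℝ 2 u ∧
  (∀ ξ : ℝ, u ξ ∈ Set.Ioo (0:ℝ) 1) ∧
  (∀ ξ : ℝ, 0 < deriv u ξ ∧ ENNReal.ofReal (deriv u ξ) < F.ω (u ξ)) ∧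
  Filter.Tendsto u Filter.atBot (nhds 0) ∧
  Filter.Tendsto u Filter.atTop (nhds 1) ∧
  (∀ ξ : ℝ, HasDerivAt (fun t => b (u t) (deriv u t)) (σ * deriv u ξ - F.f (u ξ)) ξ)

/-- A right solution with speed `σ`: `V : (α,1] → ℝ`, continuous on `(α,1]`,
C¹ on `(α,1)`, `V(1) = 0`, and on `(α,1)` : `V > 0`, `(u,V(u)) ∈ 𝒟` and
`V' = σ - f(u)/g(u,V(u))`. -/
def IsRightSolution (F : FluxData) (σ α : ℝ) (V : ℝ → ℝ) : Prop :=
  α ∈ Set.Ico (0:ℝ) 1 ∧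
  ContinuousOn V (Set.Ioc α 1) ∧
  V 1 = 0 ∧
  ∀ u ∈ Set.Ioo α 1, 0 < V u ∧ (u, V u) ∈ DSet F.aplus ∧
    HasDerivAt V (σ - F.f u / F.g u (V u)) u

open Classical in
/-- `ℋ(u,V) = 1/g(u,V)` if `0 < V < a₊(u)`, and `0` if `V ≥ a₊(u)`. -/
def Hfun (F : FluxData) (u V : ℝ) : ℝ :=
  if ENNReal.ofReal V < F.aplus u then 1 / F.g u V else 0

/-- The solution `𝒱_σ` of the extended problem: continuous on `[0,1]`, C¹ on `(0,1)`,
`𝒱(1) = 0`, `𝒱 > 0` on `(0,1)` and `𝒱' = σ - f(u)·ℋ(u,𝒱(u))` on `(0,1)`. -/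
def IsVsol (F : FluxData) (σ : ℝ) (V : ℝ → ℝ) : Prop :=
  ContinuousOn V (Set.Icc (0:ℝ) 1) ∧ V 1 = 0 ∧
  (∀ u ∈ Set.Ioo (0:ℝ) 1, 0 < V u) ∧
  (∀ u ∈ Set.Ioo (0:ℝ) 1, HasDerivAt V (σ - F.f u * Hfun F u (V u)) u)

/-- A solution to the right of the singular problem `V' = σ - (u/V)·γ(u,V)`, `V(0)=0`,
on `[0,ε)`, with values in `[0,δ]`, positive on `(0,ε)`. -/
def IsSingSol (δ : ℝ) (γ : ℝ → ℝ → ℝ) (σ ε : ℝ) (V : ℝ → ℝ) : Prop :=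
  ContinuousOn V (Set.Ico 0 ε) ∧ V 0 = 0 ∧
  (∀ u ∈ Set.Ico (0:ℝ) ε, V u ∈ Set.Icc (0:ℝ) δ) ∧
  (∀ u ∈ Set.Ioo (0:ℝ) ε, 0 < V u) ∧
  (∀ u ∈ Set.Ioo (0:ℝ) ε, HasDerivAt V (σ - u / V u * γ u (V u)) u)

/-- A solution to the left of `V' = σ - (u/V)·γ(u,V)` with `V(u₀) = V₀`, defined on
`(β,u₀]`, with values in `(0,δ]`. -/
def IsLeftSol (δ : ℝ) (γ : ℝ → ℝ → ℝ) (σ u₀ V₀ β : ℝ) (W : ℝ → ℝ) : Prop :=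
  0 ≤ β ∧ β < u₀ ∧ ContinuousOn W (Set.Ioc β u₀) ∧
  (∀ u ∈ Set.Ioc β u₀, W u ∈ Set.Ioc (0:ℝ) δ) ∧ W u₀ = V₀ ∧
  (∀ u ∈ Set.Ioo β u₀, HasDerivAt W (σ - u / W u * γ u (W u)) u)

/-!
The ratio `r(u) = V(u)/u` solves the Euler-type equation `u r' = σ - r - g(u)/r` with
`g(u) = γ(u, V(u)) → γ₀`; `r > 0`, and the mean value theorem gives `r < σ`. If `r` oscillated, every
level `m` strictly between `liminf r` and `limsup r` would be crossed both upwards and downwards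
arbitrarily close to `0`; at those crossings `u r'` takes both signs and tends to `σ - m - γ₀/m`,
so every such `m` would be a root of `m² - σm + γ₀`. Hence `r → w`. Then `u r' → σ - w - γ₀/w`,
and a nonzero limit `η` would force `r ≈ η log u`, which diverges; the same argument rules out
`w = 0`. Finally `σ = w + γ₀/w ≥ 2√γ₀`.
-/

theorem exists_mem_Ico_eq_and_deriv_nonneg {f f' : ℝ → ℝ} {a b c : ℝ} (hab : a < b)
    (hf : ∀ x ∈ Icc a b, HasDerivAt f (f' x) x) (ha : f a < c) (hb : c < f b) :
    ∃ t ∈ Ico a b, f t = c ∧ 0 ≤ f' t := by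
  have hcont : ContinuousOn f (Icc a b) := fun x hx ↦ (hf x hx).continuousAt.continuousWithinAt
  set S := Icc a b ∩ f ⁻¹' Iic c
  have hS : IsClosed S := hcont.preimage_isClosed_of_isClosed isClosed_Icc isClosed_Iic
  have hSbdd : BddAbove S := ⟨b, fun x hx ↦ hx.1.2⟩
  obtain ⟨⟨hat, htb⟩, hft⟩ : sSup S ∈ S := hS.csSup_mem ⟨a, ⟨le_rfl, hab.le⟩, ha.le⟩ hSbdd
  set t := sSup S
  have htb' : t < b := htb.lt_of_ne fun h ↦ (h ▸ hft).not_gt hb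
  have habove : ∀ s ∈ Ioc t b, c < f s := fun s hs ↦
    not_le.1 fun h ↦ hs.1.not_ge (le_csSup hSbdd ⟨⟨hat.trans hs.1.le, hs.2⟩, h⟩)
  have hIoc : Ioc t b ∈ 𝓝[>] t := Ioc_mem_nhdsGT htb'
  have hftc : f t = c := hft.antisymm <| ge_of_tendsto
    ((hf t ⟨hat, htb⟩).continuousAt.tendsto.mono_left nhdsWithin_le_nhds)
    (mem_of_superset hIoc fun s hs ↦ (habove s hs).le)
  refine ⟨t, ⟨hat, htb'⟩, hftc, ge_of_tendsto
    ((hasDerivWithinAt_iff_tendsto_slope' self_notMem_Ioi).1 (hf t ⟨hat, htb⟩).hasDerivWithinAt)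
    (mem_of_superset hIoc fun s hs ↦ ?_)⟩
  show 0 ≤ slope f t s
  rw [slope_def_field]
  exact div_nonneg (by linarith [habove s hs]) (by linarith [hs.1])

theorem frequently_eq_and_deriv_nonneg {f f' : ℝ → ℝ} {m : ℝ}
    (hf : ∀ᶠ u in 𝓝[>] 0, HasDerivAt f (f' u) u)
    (hlt : ∃ᶠ u in 𝓝[>] 0, f u < m) (hgt : ∃ᶠ u in 𝓝[>] 0, m < f u) :
    ∃ᶠ u in 𝓝[>] 0, f u = m ∧ 0 ≤ f' u := by
  refine frequently_iff.2 fun {U} hU ↦ ?_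
  obtain ⟨β, hβ, hβsub⟩ := mem_nhdsGT_iff_exists_Ioo_subset.1 (hf.and hU)
  obtain ⟨b, hfb, hb⟩ := (hgt.and_eventually (Ioo_mem_nhdsGT hβ)).exists
  obtain ⟨a, hfa, ha⟩ := (hlt.and_eventually (Ioo_mem_nhdsGT hb.1)).exists
  have hsub : Icc a b ⊆ Ioo 0 β := fun x hx ↦ ⟨ha.1.trans_le hx.1, hx.2.trans_lt hb.2⟩
  obtain ⟨t, ht, hft, hf't⟩ :=
    exists_mem_Ico_eq_and_deriv_nonneg ha.2 (fun x hx ↦ (hβsub (hsub hx)).1) hfa hfb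
  exact ⟨t, (hβsub (hsub (Ico_subset_Icc_self ht))).2, hft, hf't⟩

theorem tendsto_atBot_of_hasDerivAt_div {f φ : ℝ → ℝ} {η : ℝ} (hη : 0 < η)
    (hf : ∀ᶠ u in 𝓝[>] 0, HasDerivAt f (φ u / u) u ∧ η ≤ φ u) :
    Tendsto f (𝓝[>] 0) atBot := by
  obtain ⟨β, hβ, hβsub⟩ := mem_nhdsGT_iff_exists_Ioo_subset.1 hf
  have hmono : MonotoneOn (fun u ↦ f u - η * Real.log u) (Ioo 0 β) := by
    have hderiv : ∀ u ∈ Ioo 0 β,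
        HasDerivAt (fun u ↦ f u - η * Real.log u) ((φ u - η) / u) u := fun u hu ↦
      ((hβsub hu).1.sub ((Real.hasDerivAt_log hu.1.ne').const_mul η)).congr_deriv (by
        field_simp)
    refine monotoneOn_of_hasDerivWithinAt_nonneg (f' := fun u ↦ (φ u - η) / u) (convex_Ioo 0 β)
      (fun u hu ↦ (hderiv u hu).continuousAt.continuousWithinAt) (fun u hu ↦ ?_) fun u hu ↦ ?_
    · rw [interior_Ioo] at hu ⊢
      exact (hderiv u hu).hasDerivWithinAt
    · rw [interior_Ioo] at hu
      exact div_nonneg (sub_nonneg.2 (hβsub hu).2) hu.1.le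
  have hmid : β / 2 ∈ Ioo 0 β := ⟨half_pos hβ, half_lt_self hβ⟩
  refine tendsto_atBot_mono' _ ?_ <| tendsto_atBot_add_const_left _ (f (β / 2) - η * Real.log (β / 2))
    (Real.tendsto_log_nhdsGT_zero.const_mul_atBot hη)
  filter_upwards [Ioo_mem_nhdsGT hmid.1] with u hu
  have := hmono ⟨hu.1, hu.2.trans hmid.2⟩ hmid hu.2.le
  simp only at this
  linarith

theorem eq_zero_of_tendsto_of_hasDerivAt_div {f φ : ℝ → ℝ} {w η : ℝ}
    (hf : ∀ᶠ u in 𝓝[>] 0, HasDerivAt f (φ u / u) u)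
    (hfw : Tendsto f (𝓝[>] 0) (𝓝 w)) (hφ : Tendsto φ (𝓝[>] 0) (𝓝 η)) : η = 0 := by
  rcases lt_trichotomy η 0 with hneg | hzero | hpos
  · refine absurd hfw.neg (not_tendsto_nhds_of_tendsto_atBot
      (tendsto_atBot_of_hasDerivAt_div (φ := fun u ↦ -φ u) (η := -(η / 2)) (by linarith) ?_) _)
    filter_upwards [hf, hφ.eventually (eventually_lt_nhds (by linarith : η < η / 2))]
      with u hfu hφu
    exact ⟨(neg_div u (φ u)).symm ▸ hfu.neg, by linarith⟩
  · exact hzero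
  · refine absurd hfw (not_tendsto_nhds_of_tendsto_atBot
      (tendsto_atBot_of_hasDerivAt_div (φ := φ) (half_pos hpos) ?_) _)
    filter_upwards [hf, hφ.eventually (eventually_gt_nhds (half_lt_self hpos))] with u hfu hφu
    exact ⟨hfu, hφu.le⟩

section EulerRatio

variable {r g : ℝ → ℝ} {σ γ₀ : ℝ}

theorem sq_sub_mul_add_eq_zero_of_frequently_lt_of_frequently_gt {m : ℝ} (hm : 0 < m)
    (hg : Tendsto g (𝓝[>] 0) (𝓝 γ₀))
    (hr : ∀ᶠ u in 𝓝[>] 0, HasDerivAt r ((σ - r u - g u / r u) / u) u)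
    (hlt : ∃ᶠ u in 𝓝[>] 0, r u < m) (hgt : ∃ᶠ u in 𝓝[>] 0, m < r u) :
    m ^ 2 - σ * m + γ₀ = 0 := by
  have hlim : Tendsto (fun u ↦ σ - m - g u / m) (𝓝[>] 0) (𝓝 (σ - m - γ₀ / m)) :=
    tendsto_const_nhds.sub (hg.div_const m)
  -- at a crossing `r u = m` the sign of `r' u` is that of `σ - m - g u / m`
  have hup : ∃ᶠ u in 𝓝[>] 0, 0 ≤ σ - m - g u / m := by
    refine ((frequently_eq_and_deriv_nonneg hr hlt hgt).and_eventually
      self_mem_nhdsWithin).mono fun u ⟨⟨hru, hr'u⟩, hu⟩ ↦ ?_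
    rw [hru] at hr'u
    simpa using (le_div_iff₀ hu).1 hr'u
  have hdown : ∃ᶠ u in 𝓝[>] 0, σ - m - g u / m ≤ 0 := by
    refine ((frequently_eq_and_deriv_nonneg (f := -r) (m := -m) (hr.mono fun u h ↦ h.neg)
      (by simpa using hgt) (by simpa using hlt)).and_eventually
      self_mem_nhdsWithin).mono fun u ⟨⟨hru, hr'u⟩, hu⟩ ↦ ?_
    rw [Pi.neg_apply, neg_inj] at hru
    rw [hru, neg_nonneg] at hr'u
    simpa using (div_le_iff₀ hu).1 hr'u
  have hQ : σ - m - γ₀ / m = 0 := le_antisymm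
    (isClosed_Iic.mem_of_frequently_of_tendsto hdown hlim)
    (isClosed_Ici.mem_of_frequently_of_tendsto hup hlim)
  field_simp at hQ
  linear_combination -hQ

theorem tendsto_liminf_of_hasDerivAt (hg : Tendsto g (𝓝[>] 0) (𝓝 γ₀))
    (hr : ∀ᶠ u in 𝓝[>] 0, HasDerivAt r ((σ - r u - g u / r u) / u) u)
    (hr_pos : ∀ᶠ u in 𝓝[>] 0, 0 < r u) (hr_le : ∀ᶠ u in 𝓝[>] 0, r u ≤ σ) :
    Tendsto r (𝓝[>] 0) (𝓝 (liminf r (𝓝[>] 0))) := by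
  have hbdd_le : IsBoundedUnder (· ≤ ·) (𝓝[>] 0) r := isBoundedUnder_of_eventually_le hr_le
  have hbdd_ge : IsBoundedUnder (· ≥ ·) (𝓝[>] 0) r :=
    isBoundedUnder_of_eventually_ge (hr_pos.mono fun _ h ↦ h.le)
  set l := liminf r (𝓝[>] 0)
  set L := limsup r (𝓝[>] 0)
  have hl : 0 ≤ l := le_liminf_of_le hbdd_le.isCoboundedUnder_ge (hr_pos.mono fun _ h ↦ h.le)
  refine tendsto_of_liminf_eq_limsup rfl ?_ hbdd_le hbdd_ge
  by_contra hne
  have hlL : l < L := (liminf_le_limsup hbdd_le hbdd_ge).lt_of_ne' hne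
  have hroot : ∀ m, l < m → m < L → m ^ 2 - σ * m + γ₀ = 0 := fun m hlm hmL ↦
    sq_sub_mul_add_eq_zero_of_frequently_lt_of_frequently_gt (hl.trans_lt hlm) hg hr
      (frequently_lt_of_liminf_lt hbdd_le.isCoboundedUnder_ge hlm)
      (frequently_lt_of_lt_limsup hbdd_ge.isCoboundedUnder_le hmL)
  have h₁ := hroot (l + (L - l) / 4) (by linarith) (by linarith)
  have h₂ := hroot (l + (L - l) / 2) (by linarith) (by linarith)
  have h₃ := hroot (l + 3 * (L - l) / 4) (by linarith) (by linarith)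
  -- the second difference of `m ↦ m ^ 2 - σ * m + γ₀` with step `(L - l) / 4` is `(L - l) ^ 2 / 8`
  have : (L - l) ^ 2 = 0 := by linear_combination 8 * (h₁ - 2 * h₂ + h₃)
  exact hlL.ne' (sub_eq_zero.1 (pow_eq_zero_iff two_ne_zero |>.1 this))

theorem pos_of_tendsto_of_hasDerivAt {w : ℝ} (hγ₀ : 0 < γ₀) (hg : Tendsto g (𝓝[>] 0) (𝓝 γ₀))
    (hr : ∀ᶠ u in 𝓝[>] 0, HasDerivAt r ((σ - r u - g u / r u) / u) u)
    (hr_pos : ∀ᶠ u in 𝓝[>] 0, 0 < r u) (hrw : Tendsto r (𝓝[>] 0) (𝓝 w)) : 0 < w := by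
  refine (ge_of_tendsto hrw (hr_pos.mono fun _ h ↦ h.le)).lt_of_ne' fun hw ↦ ?_
  subst hw
  -- `g / r → +∞`, so `u r'` is eventually `≤ -1`
  have hr0 : Tendsto r (𝓝[>] 0) (𝓝[>] 0) :=
    tendsto_nhdsWithin_of_tendsto_nhds_of_eventually_within _ hrw hr_pos
  have hφ : Tendsto (fun u ↦ σ - r u - g u / r u) (𝓝[>] 0) atBot := by
    simp only [sub_eq_add_neg (σ - r _), div_eq_mul_inv]
    exact (tendsto_const_nhds.sub hrw).add_atBot
      (tendsto_neg_atTop_atBot.comp (hg.pos_mul_atTop hγ₀ (tendsto_inv_nhdsGT_zero.comp hr0)))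
  refine not_tendsto_nhds_of_tendsto_atBot
    (tendsto_atBot_of_hasDerivAt_div (f := -r) (φ := fun u ↦ -(σ - r u - g u / r u)) one_pos ?_)
    _ hrw.neg
  filter_upwards [hr, hφ.eventually (eventually_le_atBot (-1))] with u hru hφu
  exact ⟨(neg_div u _).symm ▸ hru.neg, by linarith⟩

theorem exists_tendsto_of_hasDerivAt (hγ₀ : 0 < γ₀) (hg : Tendsto g (𝓝[>] 0) (𝓝 γ₀))
    (hr : ∀ᶠ u in 𝓝[>] 0, HasDerivAt r ((σ - r u - g u / r u) / u) u)
    (hr_pos : ∀ᶠ u in 𝓝[>] 0, 0 < r u) (hr_le : ∀ᶠ u in 𝓝[>] 0, r u ≤ σ) :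
    ∃ w, 0 < w ∧ Tendsto r (𝓝[>] 0) (𝓝 w) ∧ w ^ 2 - σ * w + γ₀ = 0 := by
  have hrw := tendsto_liminf_of_hasDerivAt hg hr hr_pos hr_le
  set w := liminf r (𝓝[>] 0)
  have hw : 0 < w := pos_of_tendsto_of_hasDerivAt hγ₀ hg hr hr_pos hrw
  have hQ : σ - w - γ₀ / w = 0 := eq_zero_of_tendsto_of_hasDerivAt_div hr hrw
    ((tendsto_const_nhds.sub hrw).sub (hg.div hrw hw.ne'))
  refine ⟨w, hw, hrw, ?_⟩
  field_simp at hQ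
  linear_combination -hQ

end EulerRatio

theorem div_lt_of_hasDerivAt_lt {V V' : ℝ → ℝ} {u σ : ℝ} (hu : 0 < u)
    (hV : ContinuousOn V (Icc 0 u)) (hV0 : V 0 = 0) (hV' : ∀ x ∈ Ioo 0 u, HasDerivAt V (V' x) x)
    (hlt : ∀ x ∈ Ioo 0 u, V' x < σ) : V u / u < σ := by
  obtain ⟨c, hc, hV'c⟩ := exists_hasDerivAt_eq_slope V V' hu hV hV'
  rw [hV0, sub_zero, sub_zero] at hV'c
  exact hV'c ▸ hlt c hc

theorem HasDerivAt.div_id {V : ℝ → ℝ} {u σ c : ℝ}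
    (hV : HasDerivAt V (σ - u / V u * c) u) (hu : u ≠ 0) (hVu : V u ≠ 0) :
    HasDerivAt (fun x ↦ V x / x) ((σ - V u / u - c / (V u / u)) / u) u := by
  refine (hV.div (hasDerivAt_id u) hu).congr_deriv ?_
  simp only [id]
  field_simp
  ring

theorem tendsto_nhdsGT_comp_prodMk {γ : ℝ → ℝ → ℝ} {V : ℝ → ℝ} {s : Set (ℝ × ℝ)} {ε : ℝ}
    (hε : 0 < ε) (hγ : ContinuousWithinAt (fun p : ℝ × ℝ ↦ γ p.1 p.2) s (0, 0))
    (hV : ContinuousWithinAt V (Ico 0 ε) 0) (hV0 : V 0 = 0)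
    (hmem : MapsTo (fun u ↦ (u, V u)) (Ico 0 ε) s) :
    Tendsto (fun u ↦ γ u (V u)) (𝓝[>] 0) (𝓝 (γ 0 0)) := by
  have hcont : ContinuousWithinAt (fun u ↦ γ u (V u)) (Ico 0 ε) 0 :=
    hγ.comp_of_eq (continuousWithinAt_id.prodMk hV) hmem (by simp [hV0])
  have hle : 𝓝[>] (0 : ℝ) ≤ 𝓝[Ico 0 ε] 0 :=
    (nhdsWithin_Ico_eq_nhdsGE hε).symm ▸ nhdsWithin_mono _ Ioi_subset_Ici_self
  simpa [hV0] using hcont.tendsto.mono_left hle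

theorem stmt15_general (δ : ℝ) (γ : ℝ → ℝ → ℝ)
    (hγc : ContinuousOn (fun p : ℝ × ℝ => γ p.1 p.2) (Set.Icc 0 δ ×ˢ Set.Icc 0 δ))
    (hγpos : ∀ u ∈ Set.Icc (0:ℝ) δ, ∀ v ∈ Set.Icc (0:ℝ) δ, 0 < γ u v)
    (σ : ℝ) (ε : ℝ) (hε0 : 0 < ε) (hεδ : ε ≤ δ)
    (V : ℝ → ℝ) (hVc : ContinuousOn V (Set.Ico 0 ε)) (hV0 : V 0 = 0)
    (hVmem : ∀ u ∈ Set.Ico (0:ℝ) ε, V u ∈ Set.Icc (0:ℝ) δ)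
    (hVpos : ∀ u ∈ Set.Ioo (0:ℝ) ε, 0 < V u)
    (hODE : ∀ u ∈ Set.Ioo (0:ℝ) ε, HasDerivAt V (σ - u / V u * γ u (V u)) u) :
    2 * Real.sqrt (γ 0 0) ≤ σ ∧
    ∃ w : ℝ, Filter.Tendsto (fun u => V u / u) (nhdsWithin 0 (Set.Ioi 0)) (nhds w) ∧
      w ^ 2 - σ * w + γ 0 0 = 0 := by
  have hmem : MapsTo (fun u ↦ (u, V u)) (Ico 0 ε) (Icc 0 δ ×ˢ Icc 0 δ) :=
    fun u hu ↦ ⟨⟨hu.1, hu.2.le.trans hεδ⟩, hVmem u hu⟩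
  have hγV : ∀ u ∈ Ioo 0 ε, 0 < γ u (V u) := fun u hu ↦
    hγpos _ (hmem (Ioo_subset_Ico_self hu)).1 _ (hmem (Ioo_subset_Ico_self hu)).2
  have hδ : (0 : ℝ) ∈ Icc 0 δ := ⟨le_rfl, hε0.le.trans hεδ⟩
  have hg := tendsto_nhdsGT_comp_prodMk hε0 (hγc (0, 0) ⟨hδ, hδ⟩) (hVc 0 ⟨le_rfl, hε0⟩) hV0 hmem
  have hr_lt : ∀ u ∈ Ioo 0 ε, V u / u < σ := fun u hu ↦ by
    have hsub : Ioo 0 u ⊆ Ioo 0 ε := Ioo_subset_Ioo_right hu.2.le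
    refine div_lt_of_hasDerivAt_lt hu.1 (hVc.mono (Icc_subset_Ico_right hu.2)) hV0
      (fun x hx ↦ hODE x (hsub hx)) fun x hx ↦ sub_lt_self σ ?_
    exact mul_pos (div_pos hx.1 (hVpos x (hsub hx))) (hγV x (hsub hx))
  have hε : Ioo 0 ε ∈ 𝓝[>] (0 : ℝ) := Ioo_mem_nhdsGT hε0
  obtain ⟨w, hw, hVw, hroot⟩ := exists_tendsto_of_hasDerivAt (hγpos 0 hδ 0 hδ) hg
    (mem_of_superset hε fun u hu ↦ (hODE u hu).div_id hu.1.ne' (hVpos u hu).ne')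
    (mem_of_superset hε fun u hu ↦ div_pos (hVpos u hu) hu.1)
    (mem_of_superset hε fun u hu ↦ (hr_lt u hu).le)
  refine ⟨?_, w, hVw, hroot⟩
  nlinarith [sq_nonneg (w - Real.sqrt (γ 0 0)), Real.sq_sqrt (hγpos 0 hδ 0 hδ).le]

theorem stmt15 (δ : ℝ) (hδ : 0 < δ) (γ : ℝ → ℝ → ℝ)
    (hγc : ContinuousOn (fun p : ℝ × ℝ => γ p.1 p.2) (Set.Icc 0 δ ×ˢ Set.Icc 0 δ))
    (hγpos : ∀ u ∈ Set.Icc (0:ℝ) δ, ∀ v ∈ Set.Icc (0:ℝ) δ, 0 < γ u v)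
    (σ : ℝ) (hσ : 0 < σ) (ε : ℝ) (hε0 : 0 < ε) (hεδ : ε ≤ δ)
    (V : ℝ → ℝ) (hVc : ContinuousOn V (Set.Ico 0 ε)) (hV0 : V 0 = 0)
    (hVmem : ∀ u ∈ Set.Ico (0:ℝ) ε, V u ∈ Set.Icc (0:ℝ) δ)
    (hVpos : ∀ u ∈ Set.Ioo (0:ℝ) ε, 0 < V u)
    (hODE : ∀ u ∈ Set.Ioo (0:ℝ) ε, HasDerivAt V (σ - u / V u * γ u (V u)) u) :
    2 * Real.sqrt (γ 0 0) ≤ σ ∧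
    ∃ w : ℝ, Filter.Tendsto (fun u => V u / u) (nhdsWithin 0 (Set.Ioi 0)) (nhds w) ∧
      w ^ 2 - σ * w + γ 0 0 = 0 :=
  stmt15_general δ γ hγc hγpos σ ε hε0 hεδ V hVc hV0 hVmem hVpos hODE
end
end

section
/- Assume (H_c). Then σ_s ≥ 2·√( (∂a/∂s)(0,0) · f'(0) ). -/
open Set Filter Topology
open scoped ENNReal

noncomputable section

/-!
Suppose `𝒱_σ(0) = 0`. Near `(0,0)` we have `a(u,s) ≥ (a_s(0,0) - ε) s` and `f(u) ≥ (f'(0) - ε) u`;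
the first bound also shows `𝒱_σ(u) < a₊(u)` and `ℋ(u, 𝒱_σ(u)) ≥ (a_s(0,0) - ε) / 𝒱_σ(u)`. Hence
`V = 𝒱_σ` satisfies `V' ≤ σ - c u / V` near `0` with `c` as close to `a_s(0,0) f'(0)` as we like.
If `σ² < 4c`, then `W = V/u ≤ σ` (as `V' ≤ σ`), while `W² + 2κ log u` with `κ = c - σ²/4` is
nonincreasing, which forces `W² → ∞` as `u → 0`.
-/

theorem ContDiffOn.exists_norm_image_sub_sub_le {E G : Type*} [NormedAddCommGroup E]
    [NormedSpace ℝ E] [NormedAddCommGroup G] [NormedSpace ℝ G] {f : E → G} {s : Set E} {x₀ : E}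
    (hf : ContDiffOn ℝ 1 f s) (hs : Convex ℝ s) (hs' : UniqueDiffOn ℝ s) (hx₀ : x₀ ∈ s)
    {ε : ℝ} (hε : 0 < ε) :
    ∃ ρ > 0, ∀ x ∈ s ∩ Metric.ball x₀ ρ, ∀ y ∈ s ∩ Metric.ball x₀ ρ,
      ‖f y - f x - fderivWithin ℝ f s x₀ (y - x)‖ ≤ ε * ‖y - x‖ := by
  obtain ⟨ρ, hρ, hclose⟩ := Metric.continuousWithinAt_iff.mp
    (hf.continuousOn_fderivWithin hs' le_rfl x₀ hx₀) ε hε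
  refine ⟨ρ, hρ, fun x hx y hy => ?_⟩
  refine (hs.inter (convex_ball x₀ ρ)).norm_image_sub_le_of_norm_hasFDerivWithin_le'
    (fun z hz => ((hf.differentiableOn one_ne_zero z hz.1).hasFDerivWithinAt.mono
      inter_subset_left)) (fun z hz => ?_) hx hy
  rw [← dist_eq_norm]
  exact (hclose hz.1 hz.2).le

theorem le_mul_of_hasDerivAt_le {V V' : ℝ → ℝ} {σ δ : ℝ} (hV : ContinuousWithinAt V (Ici 0) 0)
    (hV0 : V 0 = 0) (hderiv : ∀ u ∈ Ioo 0 δ, HasDerivAt V (V' u) u)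
    (hle : ∀ u ∈ Ioo 0 δ, V' u ≤ σ) : ∀ u ∈ Ioo 0 δ, V u ≤ σ * u := by
  have hcont : ContinuousOn V (Ico 0 δ) := fun t ht => by
    rcases ht.1.eq_or_lt with rfl | ht0
    · exact hV.mono Ico_subset_Ici_self
    · exact (hderiv t ⟨ht0, ht.2⟩).continuousAt.continuousWithinAt
  have hmono : MonotoneOn (fun t => t * σ - V t) (Ico 0 δ) := by
    refine monotoneOn_of_hasDerivWithinAt_nonneg (convex_Ico 0 δ) (f' := fun x => σ - V' x)
      ((continuousOn_id.mul continuousOn_const).sub hcont) (fun x hx => ?_) (fun x hx => ?_)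
      <;> rw [interior_Ico] at hx
    · exact ((hasDerivAt_mul_const σ).sub (hderiv x hx)).hasDerivWithinAt
    · exact sub_nonneg.2 (hle x hx)
  intro u hu
  have := hmono ⟨le_rfl, hu.1.trans hu.2⟩ ⟨hu.1.le, hu.2⟩ hu.1.le
  simp only [zero_mul, hV0, sub_zero] at this
  linarith

theorem antitoneOn_sq_div_add_log {V V' : ℝ → ℝ} {σ c δ : ℝ}
    (h : ∀ u ∈ Ioo 0 δ, 0 < V u ∧ HasDerivAt V (V' u) u ∧ V' u ≤ σ - c * u / V u) :
    AntitoneOn (fun u => (V u / u) ^ 2 + 2 * (c - σ ^ 2 / 4) * Real.log u) (Ioo 0 δ) := by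
  set κ := c - σ ^ 2 / 4 with hκ
  have hderiv : ∀ x ∈ Ioo 0 δ, HasDerivAt (fun u => (V u / u) ^ 2 + 2 * κ * Real.log u)
      ((2 * (V x / x) * (V' x - V x / x) + 2 * κ) / x) x := fun x hx => by
    have hx0 := hx.1.ne'
    refine ((((h x hx).2.1.div (hasDerivAt_id' x) hx0).pow 2).add
      ((Real.hasDerivAt_log hx0).const_mul (2 * κ))).congr_deriv ?_
    simp only [Pi.div_apply, Nat.cast_ofNat, Nat.add_one_sub_one, pow_one, mul_one]
    field_simp
  refine antitoneOn_of_hasDerivWithinAt_nonpos (convex_Ioo 0 δ)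
    (f' := fun x => (2 * (V x / x) * (V' x - V x / x) + 2 * κ) / x)
    (fun x hx => (hderiv x hx).continuousAt.continuousWithinAt) (fun x hx => ?_)
    (fun x hx => ?_) <;> rw [interior_Ioo] at hx
  · exact (hderiv x hx).hasDerivWithinAt
  obtain ⟨hVx, -, hle⟩ := h x hx
  set W := V x / x
  have hW : 0 < W := div_pos hVx hx.1
  have hcW : c * x / V x * W = c := by
    have := hx.1.ne'
    simp only [W]
    field_simp
  have hV'W : V' x * W ≤ σ * W - c := by
    nlinarith [mul_le_mul_of_nonneg_right hle hW.le]
  refine div_nonpos_of_nonpos_of_nonneg ?_ hx.1.le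
  nlinarith [sq_nonneg (W - σ / 2)]

theorem four_mul_le_sq_of_hasDerivAt_le {V V' : ℝ → ℝ} {σ c : ℝ}
    (hV : ContinuousWithinAt V (Ici 0) 0) (hV0 : V 0 = 0)
    (h : ∀ᶠ u in 𝓝[>] 0, 0 < V u ∧ HasDerivAt V (V' u) u ∧ V' u ≤ σ - c * u / V u) :
    4 * c ≤ σ ^ 2 := by
  by_contra! hc
  have hκ : 0 < c - σ ^ 2 / 4 := by linarith
  obtain ⟨δ, hδ, hsub⟩ := mem_nhdsGT_iff_exists_Ioo_subset.mp h
  have hV_le := le_mul_of_hasDerivAt_le (σ := σ) hV hV0 (fun u hu => (hsub hu).2.1) fun u hu => by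
    obtain ⟨hVu, -, hle⟩ := hsub hu
    have : 0 < c * u / V u := div_pos (mul_pos (by nlinarith [sq_nonneg σ]) hu.1) hVu
    linarith
  have hG := antitoneOn_sq_div_add_log fun u hu => hsub hu
  set κ := c - σ ^ 2 / 4
  set u₀ := δ / 2
  have hu₀ : u₀ ∈ Ioo 0 δ := ⟨half_pos hδ, half_lt_self hδ⟩
  set u₁ := u₀ * Real.exp (-(σ ^ 2 + 1) / (2 * κ))
  have hexp : Real.exp (-(σ ^ 2 + 1) / (2 * κ)) < 1 :=
    Real.exp_lt_one_iff.2 (div_neg_of_neg_of_pos (neg_neg_of_pos (by positivity)) (by linarith))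
  have hu₁ : u₁ ∈ Ioo 0 δ :=
    ⟨mul_pos hu₀.1 (Real.exp_pos _), (mul_lt_of_lt_one_right hu₀.1 hexp).trans hu₀.2⟩
  have hG₀₁ := hG hu₁ hu₀ (mul_le_of_le_one_right hu₀.1.le hexp.le)
  have hlog : 2 * κ * Real.log u₁ = 2 * κ * Real.log u₀ - (σ ^ 2 + 1) := by
    rw [Real.log_mul hu₀.1.ne' (Real.exp_pos _).ne', Real.log_exp]
    field_simp
    ring
  have hW₁ : V u₁ / u₁ ≤ σ := (div_le_iff₀ hu₁.1).2 (hV_le u₁ hu₁)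
  have hW₁_pos : 0 < V u₁ / u₁ := div_pos (hsub hu₁).1 hu₁.1
  simp only [hlog] at hG₀₁
  nlinarith [sq_nonneg (V u₀ / u₀)]

namespace FluxData

variable (F : FluxData)

lemma mem_omegaSet_zero {u : ℝ} (hu : u ∈ Icc (0:ℝ) 1) : (u, (0:ℝ)) ∈ OmegaSet F.ω :=
  ⟨hu, by simpa using F.ω_pos u hu⟩

lemma a_zero {u : ℝ} (hu : u ∈ Icc (0:ℝ) 1) : F.a u 0 = 0 := by
  have h := F.a_odd u 0 (F.mem_omegaSet_zero hu)
  rw [neg_zero] at h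
  linarith

lemma strictMonoOn_a (u : ℝ) : StrictMonoOn (F.a u) {s | (u, s) ∈ OmegaSet F.ω} := by
  have hconvex : Convex ℝ {s | (u, s) ∈ OmegaSet F.ω} := by
    refine OrdConnected.convex ⟨fun s₁ h₁ s₂ h₂ θ hθ => ⟨h₁.1, ?_⟩⟩
    calc ENNReal.ofReal |θ| ≤ max (ENNReal.ofReal |s₁|) (ENNReal.ofReal |s₂|) := by
          rw [← ENNReal.ofReal_max]
          exact ENNReal.ofReal_le_ofReal (abs_le_max_abs_abs hθ.1 hθ.2)
      _ < F.ω u := max_lt h₁.2 h₂.2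
  choose! d hd_pos hd using fun s (hs : s ∈ {s | (u, s) ∈ OmegaSet F.ω}) => F.a_deriv_pos u s hs
  exact strictMonoOn_of_hasDerivWithinAt_pos hconvex
    (fun s hs => (hd s hs).continuousAt.continuousWithinAt)
    (fun s hs => (hd s (interior_subset hs)).hasDerivWithinAt)
    (fun s hs => hd_pos s (interior_subset hs))

lemma exists_Icc_prod_subset_omegaSet :
    ∃ r > 0, r ≤ 1 ∧ Icc 0 r ×ˢ Icc (-r) r ⊆ OmegaSet F.ω := by
  have h0 : (0:ℝ) ∈ Icc (0:ℝ) 1 := ⟨le_rfl, zero_le_one⟩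
  obtain ⟨q, -, hq0, hqω⟩ := ENNReal.lt_iff_exists_real_btwn.mp (F.ω_pos 0 h0)
  have hq : 0 < q := ENNReal.ofReal_pos.mp hq0
  have hev : ∀ᶠ u in 𝓝[≥] 0, u ≤ 1 ∧ ENNReal.ofReal q < F.ω u := by
    rw [← nhdsWithin_Icc_eq_nhdsGE one_pos]
    filter_upwards [self_mem_nhdsWithin, F.ω_lsc 0 h0 _ hqω] with u hu hωu
    exact ⟨hu.2, hωu⟩
  obtain ⟨r, hr, hsub⟩ := mem_nhdsGE_iff_exists_Icc_subset.mp hev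
  refine ⟨min r (q / 2), by positivity, (min_le_left _ _).trans (hsub ⟨hr.le, le_rfl⟩).1, ?_⟩
  rintro ⟨u, s⟩ ⟨hu, hs⟩
  have hu' := hsub ⟨hu.1, hu.2.trans (min_le_left _ _)⟩
  refine ⟨⟨hu.1, hu'.1⟩, lt_of_le_of_lt ?_ hu'.2⟩
  refine ENNReal.ofReal_le_ofReal ((abs_le.2 hs).trans ?_)
  linarith [min_le_right r (q / 2)]

variable {F} {da0 : ℝ}

lemma exists_mul_le_a (hda0 : HasDerivAt (F.a 0) da0 0) {c : ℝ} (hc : c < da0) :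
    ∃ r > 0, r ≤ 1 ∧ ∀ u ∈ Icc 0 r, ∀ s ∈ Icc 0 r, (u, s) ∈ OmegaSet F.ω ∧ c * s ≤ F.a u s := by
  obtain ⟨r₀, hr₀, hr₀1, hR⟩ := F.exists_Icc_prod_subset_omegaSet
  set R := Icc 0 r₀ ×ˢ Icc (-r₀) r₀
  set A : ℝ × ℝ → ℝ := fun p => F.a p.1 p.2
  have hA : ContDiffOn ℝ 1 A R := F.a_C1.mono hR
  have h00 : ((0:ℝ), (0:ℝ)) ∈ R := ⟨left_mem_Icc.2 hr₀.le, ⟨by linarith, hr₀.le⟩⟩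
  set L := fderivWithin ℝ A R (0, 0)
  have hL : L (0, 1) = da0 := by
    have hι : HasDerivWithinAt (fun s : ℝ => ((0:ℝ), s)) ((0:ℝ), (1:ℝ)) (Icc (-r₀) r₀) 0 :=
      ((hasDerivAt_const _ _).prodMk (hasDerivAt_id _)).hasDerivWithinAt
    have hpartial : HasDerivWithinAt (F.a 0) (L (0, 1)) (Icc (-r₀) r₀) 0 :=
      (hA.differentiableOn one_ne_zero _ h00).hasFDerivWithinAt.comp_hasDerivWithinAt 0 hι
        (fun s hs => ⟨left_mem_Icc.2 hr₀.le, hs⟩)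
    exact (uniqueDiffOn_Icc (by linarith) 0 ⟨by linarith, hr₀.le⟩).eq_deriv _ hpartial
      hda0.hasDerivWithinAt
  obtain ⟨ρ, hρ, hnear⟩ := hA.exists_norm_image_sub_sub_le ((convex_Icc _ _).prod (convex_Icc _ _))
    ((uniqueDiffOn_Icc hr₀).prod (uniqueDiffOn_Icc (by linarith))) h00 (sub_pos.2 hc)
  refine ⟨min r₀ (ρ / 2), by positivity, (min_le_left _ _).trans hr₀1, fun u hu s hs => ?_⟩
  have hmem : ∀ t ∈ Icc 0 (min r₀ (ρ / 2)), ((u, t) : ℝ × ℝ) ∈ R ∩ Metric.ball (0, 0) ρ := by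
    intro t ht
    have hr := min_le_left r₀ (ρ / 2)
    have hρ' := min_le_right r₀ (ρ / 2)
    refine ⟨⟨⟨hu.1, hu.2.trans hr⟩, ⟨by linarith [ht.1], ht.2.trans hr⟩⟩, ?_⟩
    rw [Metric.mem_ball, Prod.dist_eq, Real.dist_0_eq_abs, Real.dist_0_eq_abs, abs_of_nonneg hu.1,
      abs_of_nonneg ht.1]
    exact max_lt (by linarith [hu.2]) (by linarith [ht.2])
  refine ⟨hR (hmem s hs).1, ?_⟩
  have := hnear _ (hmem 0 ⟨le_rfl, hs.1.trans hs.2⟩) _ (hmem s hs)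
  have hsub : ((u, s) : ℝ × ℝ) - (u, 0) = s • ((0:ℝ), (1:ℝ)) := by simp
  rw [hsub, L.map_smul, hL, norm_smul, Prod.norm_mk] at this
  simp only [A, F.a_zero ⟨hu.1, hu.2.trans ((min_le_left _ _).trans hr₀1)⟩, sub_zero,
    smul_eq_mul, norm_zero, norm_one, zero_le_one, sup_of_le_right, mul_one, Real.norm_eq_abs,
    abs_of_nonneg hs.1] at this
  linarith [(abs_le.1 this).1]

lemma exists_div_le_Hfun (hda0 : HasDerivAt (F.a 0) da0 0) {c : ℝ} (hc0 : 0 < c) (hc : c < da0) :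
    ∃ r > 0, ∀ u ∈ Ioo 0 r, ∀ v ∈ Ioo 0 r, c / v ≤ Hfun F u v := by
  obtain ⟨r, hr, hr1, hbound⟩ := F.exists_mul_le_a hda0 hc
  refine ⟨min r (c * r), by positivity, fun u hu v hv => ?_⟩
  have hu' : u ∈ Icc 0 r := ⟨hu.1.le, hu.2.le.trans (min_le_left _ _)⟩
  have hu01 : u ∈ Icc (0:ℝ) 1 := ⟨hu'.1, hu'.2.trans hr1⟩
  obtain ⟨hrΩ, hr_le⟩ := hbound u hu' r ⟨hr.le, le_rfl⟩
  have hv_lt : v < F.a u r := hv.2.trans_le ((min_le_right _ _).trans hr_le)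
  have hv_aplus : ENNReal.ofReal v < F.aplus u := by
    rw [F.aplus_def u hu01]
    exact ((ENNReal.ofReal_lt_ofReal_iff_of_nonneg hv.1.le).2 hv_lt).trans_le
      (le_iSup₂ (f := fun s _ => ENNReal.ofReal (F.a u s)) r ⟨hr, hrΩ⟩)
  obtain ⟨hgΩ, hga⟩ := F.g_spec (u, v) ⟨hu01, by rwa [abs_of_pos hv.1]⟩
  dsimp only at hgΩ hga
  have hg0 : 0 < F.g u v := ((F.strictMonoOn_a u).lt_iff_lt (F.mem_omegaSet_zero hu01) hgΩ).1
    (by rw [F.a_zero hu01, hga]; exact hv.1)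
  have hgr : F.g u v < r := ((F.strictMonoOn_a u).lt_iff_lt hgΩ hrΩ).1 (by rwa [hga])
  have hcg := (hbound u hu' _ ⟨hg0.le, hgr.le⟩).2
  rw [Hfun, if_pos hv_aplus, div_le_div_iff₀ hv.1 hg0]
  linarith

lemma four_mul_le_sq_of_isVsol {df0 σ : ℝ} {V : ℝ → ℝ} (hV : IsVsol F σ V) (hV0 : V 0 = 0)
    (hda0 : HasDerivAt (F.a 0) da0 0) (hdf0 : HasDerivWithinAt F.f df0 (Icc (0:ℝ) 1) 0) :
    4 * (da0 * df0) ≤ σ ^ 2 := by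
  obtain ⟨hVc, -, hVpos, hVderiv⟩ := hV
  have hda0_pos : 0 < da0 := by
    obtain ⟨d, hd, hderiv⟩ := F.a_deriv_pos 0 0 (F.mem_omegaSet_zero ⟨le_rfl, zero_le_one⟩)
    rwa [hda0.unique hderiv]
  have hVcont : ContinuousWithinAt V (Ici 0) 0 :=
    (hVc 0 ⟨le_rfl, zero_le_one⟩).mono_of_mem_nhdsWithin (Icc_mem_nhdsGE one_pos)
  have hslope : Tendsto (slope F.f 0) (𝓝[>] 0) (𝓝 df0) :=
    (hasDerivWithinAt_iff_tendsto_slope' self_notMem_Ioi).1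
      (hdf0.mono_of_mem_nhdsWithin (Icc_mem_nhdsGT one_pos))
  have hbound : ∀ ε ∈ Ioo 0 da0, 4 * ((da0 - ε) * (df0 - ε)) ≤ σ ^ 2 := by
    rintro ε ⟨hε, hεa⟩
    obtain ⟨r, hr, hH⟩ := F.exists_div_le_Hfun hda0 (sub_pos.2 hεa) (sub_lt_self _ hε)
    refine four_mul_le_sq_of_hasDerivAt_le (V' := fun u => σ - F.f u * Hfun F u (V u)) hVcont hV0 ?_
    filter_upwards [hslope.eventually (lt_mem_nhds (sub_lt_self df0 hε)),
      (hVcont.tendsto.mono_left (nhdsWithin_mono _ Ioi_subset_Ici_self)).eventually_lt_const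
        (hV0 ▸ hr), Ioo_mem_nhdsGT (lt_min hr one_pos)] with u hfu hVu hu
    have hu01 : u ∈ Ioo (0:ℝ) 1 := ⟨hu.1, hu.2.trans_le (min_le_right _ _)⟩
    have hVu_pos := hVpos u hu01
    rw [slope_def_field, F.f_zero, sub_zero, sub_zero, lt_div_iff₀ hu.1] at hfu
    refine ⟨hVu_pos, hVderiv u hu01, sub_le_sub_left ?_ σ⟩
    calc (da0 - ε) * (df0 - ε) * u / V u = (df0 - ε) * u * ((da0 - ε) / V u) := by ring
      _ ≤ F.f u * Hfun F u (V u) :=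
        mul_le_mul hfu.le (hH u ⟨hu.1, hu.2.trans_le (min_le_left _ _)⟩ (V u) ⟨hVu_pos, hVu⟩)
          (div_nonneg (sub_pos.2 hεa).le hVu_pos.le) (F.f_pos u hu01).le
  have hlim : Tendsto (fun ε => 4 * ((da0 - ε) * (df0 - ε))) (𝓝[>] 0) (𝓝 (4 * (da0 * df0))) := by
    have hcont : Continuous fun ε : ℝ => 4 * ((da0 - ε) * (df0 - ε)) := by fun_prop
    simpa using (hcont.tendsto 0).mono_left nhdsWithin_le_nhds
  exact le_of_tendsto hlim (eventually_of_mem (Ioo_mem_nhdsGT hda0_pos) hbound)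

end FluxData

theorem stmt16_general (F : FluxData)
    (𝒱 : ℝ → ℝ → ℝ) (h𝒱 : ∀ σ : ℝ, 0 ≤ σ → IsVsol F σ (𝒱 σ))
    (σs : ℝ) (hσs : σs = sInf {σ : ℝ | 0 ≤ σ ∧ 𝒱 σ 0 = 0})
    (hne : {σ : ℝ | 0 ≤ σ ∧ 𝒱 σ 0 = 0}.Nonempty)
    (da0 df0 : ℝ) (hda0 : HasDerivAt (F.a 0) da0 0)
    (hdf0 : HasDerivWithinAt F.f df0 (Set.Icc (0:ℝ) 1) 0) :
    2 * Real.sqrt (da0 * df0) ≤ σs := by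
  rw [hσs]
  refine le_csInf hne ?_
  rintro σ ⟨hσ, hσ0⟩
  have := F.four_mul_le_sq_of_isVsol (h𝒱 σ hσ) hσ0 hda0 hdf0
  rw [← le_div_iff₀' two_pos, Real.sqrt_le_left (by positivity)]
  linarith

theorem stmt16 (F : FluxData) (hc : ContinuousOn F.aplus (Set.Icc (0:ℝ) 1))
    (𝒱 : ℝ → ℝ → ℝ) (h𝒱 : ∀ σ : ℝ, 0 ≤ σ → IsVsol F σ (𝒱 σ))
    (σs : ℝ) (hσs : σs = sInf {σ : ℝ | 0 ≤ σ ∧ 𝒱 σ 0 = 0})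
    (hne : {σ : ℝ | 0 ≤ σ ∧ 𝒱 σ 0 = 0}.Nonempty)
    (da0 df0 : ℝ) (hda0 : HasDerivAt (F.a 0) da0 0)
    (hdf0 : HasDerivWithinAt F.f df0 (Set.Icc (0:ℝ) 1) 0) :
    2 * Real.sqrt (da0 * df0) ≤ σs :=
  stmt16_general F 𝒱 h𝒱 σs hσs hne da0 df0 hda0 hdf0
end
end

section
/- Let δ > 0 and let γ : [0,δ]² → (0,∞) be continuous and Lipschitz in its second variable, i.e., there is L > 0 with |γ(u,V₂) − γ(u,V₁)| ≤ L·|V₂ − V₁| for all u, V₁, V₂ ∈ [0,δ]. Set γ₀ := γ(0,0) and let σ > 2√γ₀. Then there exist ε ∈ (0,δ] and a continuous function V : [0,ε) → [0,δ] with V(0) = 0, V(u) > 0 for u ∈ (0,ε), V differentiable on (0,ε) with V'(u) = σ − (u/V(u))·γ(u,V(u)), and lim_{u→0⁺} V(u)/u = (σ + √(σ² − 4γ₀))/2. Moreover this solution is unique: any two functions with all these properties coincide on a common interval [0,ε') to the right of 0. -/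
open Set Filter Topology
open scoped ENNReal

noncomputable section

open scoped NNReal

/-!
Writing `V = u * w` turns `V' = σ - (u / V) γ(u, V)` into the fixed-point problem
`w(u) = (1/u) ∫₀ᵘ F(t, w(t)) dt` with `F(t, w) = σ - γ(t, t w) / w`. The larger root `c` of
`c² - σ c + γ(0,0) = 0` is a fixed point of `F(0, ·)`, and `|∂_w F(0, c)| = |γ(0,0)| / c² < 1`;
by continuity of `γ` and its Lipschitz bound, `F(t, ·)` is then a contraction of `[c - r, c + r]`
into itself for all `t ∈ [0, ε]`, once `r` and `ε` are small. Averaging over `[0, u]` preserves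
both properties, so Banach's fixed point theorem produces `w`, hence `V`, with `V / u → c`.
For uniqueness, the mean value theorem applied to `V₁ - V₂` on `[0, u]` shows that any uniform
bound on `|V₁ / u - V₂ / u|` near `0` improves by the contraction factor, so the bound is `0`.
-/

lemma LipschitzOnWith.mapsTo_closedBall {X : Type*} [PseudoMetricSpace X] {f : X → X} {k : ℝ≥0}
    {c : X} {r : ℝ} (hf : LipschitzOnWith k f (Metric.closedBall c r))
    (hc : dist (f c) c ≤ (1 - k) * r) :
    MapsTo f (Metric.closedBall c r) (Metric.closedBall c r) := fun x hx => by
  have hr : 0 ≤ r := Metric.nonempty_closedBall.1 ⟨x, hx⟩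
  rw [Metric.mem_closedBall] at hx ⊢
  calc dist (f x) c ≤ dist (f x) (f c) + dist (f c) c := dist_triangle _ _ _
    _ ≤ k * dist x c + (1 - k) * r :=
        add_le_add (hf.dist_le_mul _ (Metric.mem_closedBall.2 hx) _
          (Metric.mem_closedBall_self hr)) hc
    _ ≤ k * r + (1 - k) * r := by gcongr
    _ = r := by ring

lemma abs_div_sub_div_le {p q w w' a : ℝ} (ha : 0 < a) (hw : a ≤ w) (hw' : a ≤ w') :
    |p / w - q / w'| ≤ |p - q| / a + |q| * |w - w'| / a ^ 2 := by
  have hw0 : 0 < w := ha.trans_le hw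
  have hw'0 : 0 < w' := ha.trans_le hw'
  have hsplit : p / w - q / w' = (p - q) / w + q * (w' - w) / (w * w') := by
    field_simp; ring
  rw [hsplit]
  refine (abs_add_le _ _).trans (add_le_add ?_ ?_)
  · rw [abs_div, abs_of_pos hw0]
    exact div_le_div_of_nonneg_left (abs_nonneg _) ha hw
  · rw [abs_div, abs_mul, abs_of_pos (mul_pos hw0 hw'0), abs_sub_comm w' w, sq]
    exact div_le_div_of_nonneg_left (by positivity) (mul_pos ha ha) (mul_le_mul hw hw' ha.le hw0.le)

lemma larger_root_spec {g σ c : ℝ} (hσ : 2 * √g < σ) (hc : c = (σ + √(σ ^ 2 - 4 * g)) / 2) :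
    0 < c ∧ c * (σ - c) = g ∧ |g| < c ^ 2 := by
  have hσ0 : 0 < σ := (mul_nonneg zero_le_two (Real.sqrt_nonneg g)).trans_lt hσ
  have hg : g < (σ / 2) ^ 2 := (Real.sqrt_lt' (half_pos hσ0)).1 (by linarith)
  have hs : √(σ ^ 2 - 4 * g) ^ 2 = σ ^ 2 - 4 * g := Real.sq_sqrt (by linarith)
  have hs0 : 0 < √(σ ^ 2 - 4 * g) := Real.sqrt_pos.2 (by linarith)
  have hc0 : 0 < c := by rw [hc]; positivity
  have hroot : c * (σ - c) = g := by rw [hc]; linear_combination -hs / 4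
  refine ⟨hc0, hroot, abs_lt.2 ⟨?_, ?_⟩⟩ <;> rw [← hroot] <;> nlinarith

section RunningMean

-- `(1/u) ∫₀ᵘ f`, extended to `u = 0` by its limit `f 0` via `dslope`.
def runningMean (f : ℝ → ℝ) : ℝ → ℝ :=
  dslope (fun x => ∫ t in (0:ℝ)..x, f t) 0

variable {f g : ℝ → ℝ}

lemma Continuous.hasDerivAt_primitive (hf : Continuous f) (x : ℝ) :
    HasDerivAt (fun x => ∫ t in (0:ℝ)..x, f t) (f x) x :=
  (hf.integral_hasStrictDerivAt 0 x).hasDerivAt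

lemma Continuous.runningMean (hf : Continuous f) : Continuous (runningMean f) :=
  continuousOn_univ.1 <| (continuousOn_dslope univ_mem).2
    ⟨fun x _ => (hf.hasDerivAt_primitive x).continuousAt.continuousWithinAt,
      (hf.hasDerivAt_primitive 0).differentiableAt⟩

lemma runningMean_zero (hf : Continuous f) : runningMean f 0 = f 0 := by
  rw [runningMean, dslope_same, (hf.hasDerivAt_primitive 0).deriv]

lemma mul_runningMean (f : ℝ → ℝ) (u : ℝ) : u * runningMean f u = ∫ t in (0:ℝ)..u, f t := by
  rcases eq_or_ne u 0 with rfl | hu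
  · simp
  · rw [runningMean, dslope_of_ne _ hu, slope_def_field, intervalIntegral.integral_same,
      sub_zero, sub_zero, mul_div_cancel₀ _ hu]

lemma runningMean_mem_Icc {a b u : ℝ} (hf : Continuous f) (hu : 0 ≤ u)
    (hab : ∀ t ∈ Icc 0 u, f t ∈ Icc a b) : runningMean f u ∈ Icc a b := by
  rcases hu.eq_or_lt with rfl | hu
  · exact runningMean_zero hf ▸ hab 0 (left_mem_Icc.2 le_rfl)
  have hint := hf.intervalIntegrable (μ := MeasureTheory.volume) 0 u
  have hlower : u * a ≤ u * runningMean f u := by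
    rw [mul_runningMean]
    simpa using intervalIntegral.integral_mono_on hu.le intervalIntegrable_const hint
      fun t ht => (hab t ht).1
  have hupper : u * runningMean f u ≤ u * b := by
    rw [mul_runningMean]
    simpa using intervalIntegral.integral_mono_on hu.le hint intervalIntegrable_const
      fun t ht => (hab t ht).2
  exact ⟨le_of_mul_le_mul_left hlower hu, le_of_mul_le_mul_left hupper hu⟩

lemma abs_runningMean_sub_le {C u : ℝ} (hf : Continuous f) (hg : Continuous g) (hu : 0 ≤ u)
    (hfg : ∀ t ∈ Icc 0 u, |f t - g t| ≤ C) :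
    |runningMean f u - runningMean g u| ≤ C := by
  rcases hu.eq_or_lt with rfl | hu
  · rw [runningMean_zero hf, runningMean_zero hg]
    exact hfg 0 (left_mem_Icc.2 le_rfl)
  have hint : ‖∫ t in (0:ℝ)..u, (f t - g t)‖ ≤ C * |u - 0| :=
    intervalIntegral.norm_integral_le_of_norm_le_const fun t ht =>
      hfg t (Ioc_subset_Icc_self (uIoc_of_le hu.le ▸ ht))
  rw [intervalIntegral.integral_sub (hf.intervalIntegrable _ _) (hg.intervalIntegrable _ _),
    ← mul_runningMean, ← mul_runningMean, ← mul_sub, Real.norm_eq_abs, abs_mul, sub_zero,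
    abs_of_pos hu, mul_comm C] at hint
  exact le_of_mul_le_mul_left hint hu

lemma exists_eq_runningMean {G : ℝ → ℝ → ℝ} {k : ℝ≥0} {ε : ℝ} (hε : 0 ≤ ε) (hk : k < 1)
    (hG : Continuous (Function.uncurry G)) (hlip : ∀ t, LipschitzWith k (G t)) :
    ∃ W : ℝ → ℝ, Continuous W ∧ ∀ u ∈ Icc 0 ε, W u = runningMean (fun t => G t (W t)) u := by
  have hcomp (W : C(Icc 0 ε, ℝ)) : Continuous fun t => G t (IccExtend hε W t) :=
    hG.comp (continuous_id.prodMk (continuous_IccExtend_iff.2 W.continuous))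
  let T (W : C(Icc 0 ε, ℝ)) : C(Icc 0 ε, ℝ) :=
    ⟨fun u => runningMean (fun t => G t (IccExtend hε W t)) u,
      (hcomp W).runningMean.comp continuous_subtype_val⟩
  have hT : ContractingWith k T := by
    refine ⟨hk, LipschitzWith.of_dist_le_mul fun W₁ W₂ =>
      (ContinuousMap.dist_le (by positivity)).2 fun u => ?_⟩
    refine abs_runningMean_sub_le (hcomp W₁) (hcomp W₂) u.2.1 fun t ht => ?_
    have htε : t ∈ Icc 0 ε := ⟨ht.1, ht.2.trans u.2.2⟩
    rw [IccExtend_of_mem _ _ htε, IccExtend_of_mem _ _ htε, ← Real.dist_eq]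
    exact ((hlip t).dist_le_mul _ _).trans
      (mul_le_mul_of_nonneg_left (ContinuousMap.dist_apply_le_dist _) k.2)
  set W := ContractingWith.fixedPoint T hT
  refine ⟨IccExtend hε W, continuous_IccExtend_iff.2 W.continuous, fun u hu => ?_⟩
  rw [IccExtend_of_mem _ _ hu]
  exact (congrArg (· ⟨u, hu⟩) hT.fixedPoint_isFixedPt).symm

end RunningMean

structure IsContractingBox (F : ℝ → ℝ → ℝ) (ε a b : ℝ) (k : ℝ≥0) : Prop where
  continuousOn : ContinuousOn (Function.uncurry F) (Icc 0 ε ×ˢ Icc a b)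
  mapsTo : ∀ t ∈ Icc 0 ε, MapsTo (F t) (Icc a b) (Icc a b)
  lipschitzOnWith : ∀ t ∈ Icc 0 ε, LipschitzOnWith k (F t) (Icc a b)
  lt_one : k < 1

-- `V' = F(u, V/u)`: for `F` independent of `u` this is the classical homogeneous equation.
def IsHomogeneousSol (F : ℝ → ℝ → ℝ) (ε : ℝ) (V : ℝ → ℝ) : Prop :=
  ContinuousOn V (Ico 0 ε) ∧ V 0 = 0 ∧ ∀ u ∈ Ioo 0 ε, HasDerivAt V (F u (V u / u)) u

lemma IsHomogeneousSol.mono {F : ℝ → ℝ → ℝ} {ε ε' : ℝ} {V : ℝ → ℝ}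
    (hV : IsHomogeneousSol F ε V) (hε : ε' ≤ ε) : IsHomogeneousSol F ε' V :=
  ⟨hV.1.mono (Ico_subset_Ico_right hε), hV.2.1,
    fun u hu => hV.2.2 u (Ioo_subset_Ioo_right hε hu)⟩

-- Clamping both arguments into the box makes the Picard operator a contraction on the whole
-- of `C([0, ε], ℝ)`, so no invariant subset is needed.
def boxClamp (F : ℝ → ℝ → ℝ) {ε a b : ℝ} (hε : 0 ≤ ε) (hab : a ≤ b) (t w : ℝ) : ℝ :=
  F (projIcc 0 ε hε t) (projIcc a b hab w)

namespace IsContractingBox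

variable {F : ℝ → ℝ → ℝ} {ε a b : ℝ} {k : ℝ≥0}

lemma mono (hF : IsContractingBox F ε a b k) {ε' : ℝ} (hε : ε' ≤ ε) :
    IsContractingBox F ε' a b k where
  continuousOn := hF.continuousOn.mono (prod_mono (Icc_subset_Icc_right hε) subset_rfl)
  mapsTo t ht := hF.mapsTo t (Icc_subset_Icc_right hε ht)
  lipschitzOnWith t ht := hF.lipschitzOnWith t (Icc_subset_Icc_right hε ht)
  lt_one := hF.lt_one

section Clamp

variable (hF : IsContractingBox F ε a b k) (hε : 0 ≤ ε) (hab : a ≤ b)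
include hF

lemma continuous_boxClamp : Continuous (Function.uncurry (boxClamp F hε hab)) :=
  hF.continuousOn.comp_continuous
    (f := fun p : ℝ × ℝ => ((projIcc 0 ε hε p.1 : ℝ), (projIcc a b hab p.2 : ℝ)))
    (by fun_prop) fun p => ⟨(projIcc 0 ε hε p.1).2, (projIcc a b hab p.2).2⟩

lemma boxClamp_mem (t w : ℝ) : boxClamp F hε hab t w ∈ Icc a b :=
  hF.mapsTo _ (projIcc 0 ε hε t).2 (projIcc a b hab w).2

lemma lipschitzWith_boxClamp (t : ℝ) : LipschitzWith k (boxClamp F hε hab t) :=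
  LipschitzWith.of_dist_le_mul fun w w' => by
    refine ((hF.lipschitzOnWith _ (projIcc 0 ε hε t).2).dist_le_mul _ (projIcc a b hab w).2 _
      (projIcc a b hab w').2).trans (mul_le_mul_of_nonneg_left ?_ k.2)
    simpa [Subtype.dist_eq] using (LipschitzWith.projIcc hab).dist_le_mul w w'

omit hF in
lemma boxClamp_of_mem {t w : ℝ} (ht : t ∈ Icc 0 ε) (hw : w ∈ Icc a b) :
    boxClamp F hε hab t w = F t w := by
  simp [boxClamp, projIcc_of_mem _ ht, projIcc_of_mem _ hw]

end Clamp

variable (hF : IsContractingBox F ε a b k)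
include hF

theorem exists_isHomogeneousSol (hε : 0 < ε) {c : ℝ} (hc : c ∈ Icc a b) (hFc : F 0 c = c) :
    ∃ V, IsHomogeneousSol F ε V ∧ (∀ u ∈ Ioo 0 ε, V u / u ∈ Icc a b) ∧
      Tendsto (fun u => V u / u) (𝓝[>] 0) (𝓝 c) := by
  have hab : a ≤ b := hc.1.trans hc.2
  set G := boxClamp F hε.le hab
  obtain ⟨W, hWc, hW⟩ := exists_eq_runningMean hε.le hF.lt_one
    (hF.continuous_boxClamp hε.le hab) (hF.lipschitzWith_boxClamp hε.le hab)
  have hGW : Continuous fun t => G t (W t) :=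
    (hF.continuous_boxClamp hε.le hab).comp (continuous_id.prodMk hWc)
  have hWmem (u) (hu : u ∈ Icc 0 ε) : W u ∈ Icc a b :=
    hW u hu ▸ runningMean_mem_Icc hGW hu.1 fun t _ => hF.boxClamp_mem hε.le hab t (W t)
  have hW0 : W 0 = c := by
    have hfix : Function.IsFixedPt (G 0) (W 0) :=
      ((hW 0 (left_mem_Icc.2 hε.le)).trans (runningMean_zero hGW)).symm
    have hfixc : Function.IsFixedPt (G 0) c :=
      (boxClamp_of_mem hε.le hab (left_mem_Icc.2 hε.le) hc).trans hFc
    exact ContractingWith.fixedPoint_unique' ⟨hF.lt_one, hF.lipschitzWith_boxClamp hε.le hab 0⟩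
      hfix hfixc
  set V := fun x => ∫ t in (0:ℝ)..x, G t (W t)
  have hVW (u) (hu : u ∈ Ioc 0 ε) : V u / u = W u := by
    simp only [V]
    rw [← mul_runningMean, ← hW u (Ioc_subset_Icc_self hu), mul_div_cancel_left₀ _ hu.1.ne']
  refine ⟨V, ⟨continuous_iff_continuousAt.2 (fun x => (hGW.hasDerivAt_primitive x).continuousAt)
      |>.continuousOn, intervalIntegral.integral_same, fun u hu => ?_⟩,
    fun u hu => hVW u (Ioo_subset_Ioc_self hu) ▸ hWmem u (Ioo_subset_Icc_self hu), ?_⟩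
  · have hu' := Ioo_subset_Icc_self hu
    rw [hVW u (Ioo_subset_Ioc_self hu), ← boxClamp_of_mem (F := F) hε.le hab hu' (hWmem u hu')]
    exact hGW.hasDerivAt_primitive u
  · refine (hW0 ▸ (hWc.tendsto 0).mono_left nhdsWithin_le_nhds).congr' ?_
    filter_upwards [Ioo_mem_nhdsGT hε] with u hu
    exact (hVW u (Ioo_subset_Ioc_self hu)).symm

theorem eqOn_of_isHomogeneousSol {V₁ V₂ : ℝ → ℝ}
    (h₁ : IsHomogeneousSol F ε V₁) (h₂ : IsHomogeneousSol F ε V₂)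
    (hW₁ : ∀ u ∈ Ioo 0 ε, V₁ u / u ∈ Icc a b) (hW₂ : ∀ u ∈ Ioo 0 ε, V₂ u / u ∈ Icc a b) :
    EqOn V₁ V₂ (Ico 0 ε) := by
  have hstep (C : ℝ) (hC : ∀ u ∈ Ioo 0 ε, |V₁ u / u - V₂ u / u| ≤ C) (u) (hu : u ∈ Ioo 0 ε) :
      |V₁ u / u - V₂ u / u| ≤ k * C := by
    obtain ⟨s, hs, hslope⟩ := exists_hasDerivAt_eq_slope (fun x => V₁ x - V₂ x)
      (fun x => F x (V₁ x / x) - F x (V₂ x / x)) hu.1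
      ((h₁.1.sub h₂.1).mono (Icc_subset_Ico_right hu.2))
      fun x hx => (h₁.2.2 x ⟨hx.1, hx.2.trans hu.2⟩).sub (h₂.2.2 x ⟨hx.1, hx.2.trans hu.2⟩)
    have hsε : s ∈ Ioo 0 ε := ⟨hs.1, hs.2.trans hu.2⟩
    have hdiff : V₁ u / u - V₂ u / u = F s (V₁ s / s) - F s (V₂ s / s) := by
      rw [hslope, h₁.2.1, h₂.2.1]; ring
    rw [hdiff, ← Real.dist_eq]
    calc _ ≤ k * dist (V₁ s / s) (V₂ s / s) :=
          (hF.lipschitzOnWith s (Ioo_subset_Icc_self hsε)).dist_le_mul _ (hW₁ s hsε) _ (hW₂ s hsε)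
      _ ≤ k * C := mul_le_mul_of_nonneg_left (hC s hsε) k.2
  have hiter (n : ℕ) : ∀ u ∈ Ioo 0 ε, |V₁ u / u - V₂ u / u| ≤ k ^ n * (b - a) := by
    induction n with
    | zero =>
      intro u hu
      have h₁u := hW₁ u hu
      have h₂u := hW₂ u hu
      rw [pow_zero, one_mul, abs_sub_le_iff]
      constructor <;> linarith [h₁u.1, h₁u.2, h₂u.1, h₂u.2]
    | succ n ih => simpa only [pow_succ, mul_comm _ (k : ℝ), mul_assoc] using hstep _ ih
  intro u hu
  rcases hu.1.eq_or_lt with rfl | hu0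
  · rw [h₁.2.1, h₂.2.1]
  have hlim : Tendsto (fun n : ℕ => (k : ℝ) ^ n * (b - a)) atTop (𝓝 0) := by
    simpa using (tendsto_pow_atTop_nhds_zero_of_lt_one k.2 hF.lt_one).mul_const (b - a)
  have hW : V₁ u / u = V₂ u / u := sub_eq_zero.1 <| abs_nonpos_iff.1 <|
    ge_of_tendsto' hlim fun n => hiter n u ⟨hu0, hu.2⟩
  exact (div_left_inj' hu0.ne').1 hW

theorem exists_eqOn_of_tendsto {c : ℝ} (hc : Icc a b ∈ 𝓝 c) (hε : 0 < ε) {ε₁ ε₂ : ℝ}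
    (hε₁ : 0 < ε₁) (hε₂ : 0 < ε₂) {V₁ V₂ : ℝ → ℝ}
    (h₁ : IsHomogeneousSol F ε₁ V₁) (h₂ : IsHomogeneousSol F ε₂ V₂)
    (hT₁ : Tendsto (fun u => V₁ u / u) (𝓝[>] 0) (𝓝 c))
    (hT₂ : Tendsto (fun u => V₂ u / u) (𝓝[>] 0) (𝓝 c)) :
    ∃ ε₃ > 0, EqOn V₁ V₂ (Ico 0 ε₃) := by
  obtain ⟨b', hb', hnear⟩ := mem_nhdsGT_iff_exists_Ioo_subset.1
    ((hT₁.eventually hc).and (hT₂.eventually hc))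
  set ε₃ := min (min b' ε) (min ε₁ ε₂)
  have hε₃ : ε₃ ≤ b' ∧ ε₃ ≤ ε ∧ ε₃ ≤ ε₁ ∧ ε₃ ≤ ε₂ := by simp [ε₃]
  refine ⟨ε₃, lt_min (lt_min hb' hε) (lt_min hε₁ hε₂), ?_⟩
  exact (hF.mono hε₃.2.1).eqOn_of_isHomogeneousSol (h₁.mono hε₃.2.2.1) (h₂.mono hε₃.2.2.2)
    (fun u hu => (hnear ⟨hu.1, hu.2.trans_le hε₃.1⟩).1)
    (fun u hu => (hnear ⟨hu.1, hu.2.trans_le hε₃.1⟩).2)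

end IsContractingBox

def ratioField (γ : ℝ → ℝ → ℝ) (σ t w : ℝ) : ℝ := σ - γ t (t * w) / w

section RatioField

variable {γ : ℝ → ℝ → ℝ} {δ L σ c r ε : ℝ}

lemma ratioField_div (γ : ℝ → ℝ → ℝ) (σ : ℝ) {u : ℝ} (V : ℝ) (hu : u ≠ 0) :
    ratioField γ σ u (V / u) = σ - u / V * γ u V := by
  rw [ratioField, mul_div_cancel₀ _ hu, div_div_eq_mul_div, div_mul_eq_mul_div, mul_comm]

lemma ratioField_zero (hc : c ≠ 0) (h : c * (σ - c) = γ 0 0) :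
    ratioField γ σ 0 c = c := by
  rw [ratioField, zero_mul, ← h, mul_div_cancel_left₀ _ hc]; ring

lemma continuousOn_ratioField
    (hγc : ContinuousOn (fun p : ℝ × ℝ => γ p.1 p.2) (Icc 0 δ ×ˢ Icc 0 δ))
    (hrc : r < c) (hεδ : ε ≤ δ) (hδ : ε * (c + r) ≤ δ) :
    ContinuousOn (Function.uncurry (ratioField γ σ)) (Icc 0 ε ×ˢ Icc (c - r) (c + r)) := by
  refine continuousOn_const.sub ((hγc.comp (f := fun p : ℝ × ℝ => (p.1, p.1 * p.2))
    (by fun_prop) fun p hp => ?_).div continuousOn_snd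
    fun p (hp : p ∈ Icc 0 ε ×ˢ Icc (c - r) (c + r)) => ((sub_pos.2 hrc).trans_le hp.2.1).ne')
  have hw : 0 ≤ p.2 := (sub_pos.2 hrc).le.trans hp.2.1
  exact ⟨⟨hp.1.1, hp.1.2.trans hεδ⟩, mul_nonneg hp.1.1 hw,
    (mul_le_mul hp.1.2 hp.2.2 hw (hp.1.1.trans hp.1.2)).trans hδ⟩

lemma lipschitzOnWith_ratioField
    (hlip : ∀ u ∈ Icc (0:ℝ) δ, ∀ V₁ ∈ Icc (0:ℝ) δ, ∀ V₂ ∈ Icc (0:ℝ) δ,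
      |γ u V₂ - γ u V₁| ≤ L * |V₂ - V₁|)
    (hL : 0 ≤ L) (hrc : r < c) (hεδ : ε ≤ δ) (hδ : ε * (c + r) ≤ δ) {Γ : ℝ} {k : ℝ≥0}
    (hΓ : ∀ t ∈ Icc 0 ε, ∀ w ∈ Icc (c - r) (c + r), |γ t (t * w)| ≤ Γ)
    (hk : L * ε / (c - r) + Γ / (c - r) ^ 2 ≤ k) {t : ℝ} (ht : t ∈ Icc 0 ε) :
    LipschitzOnWith k (ratioField γ σ t) (Icc (c - r) (c + r)) := by
  have ha : 0 < c - r := sub_pos.2 hrc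
  have hbox (w) (hw : w ∈ Icc (c - r) (c + r)) : t * w ∈ Icc 0 δ :=
    ⟨mul_nonneg ht.1 (ha.le.trans hw.1),
      (mul_le_mul ht.2 hw.2 (ha.le.trans hw.1) (ht.1.trans ht.2)).trans hδ⟩
  have htδ : t ∈ Icc 0 δ := ⟨ht.1, ht.2.trans hεδ⟩
  refine LipschitzOnWith.of_dist_le_mul fun w hw w' hw' => ?_
  have hγw : |γ t (t * w') - γ t (t * w)| ≤ L * ε * |w - w'| := by
    calc _ ≤ L * |t * w' - t * w| := hlip t htδ _ (hbox w hw) _ (hbox w' hw')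
      _ = L * t * |w - w'| := by rw [← mul_sub, abs_mul, abs_of_nonneg ht.1, abs_sub_comm]; ring
      _ ≤ L * ε * |w - w'| := by gcongr; exact ht.2
  rw [Real.dist_eq, Real.dist_eq, ratioField, ratioField, sub_sub_sub_cancel_left]
  calc _ ≤ |γ t (t * w') - γ t (t * w)| / (c - r) + |γ t (t * w)| * |w' - w| / (c - r) ^ 2 :=
        abs_div_sub_div_le ha hw'.1 hw.1
    _ ≤ L * ε * |w - w'| / (c - r) + Γ * |w - w'| / (c - r) ^ 2 := by
        rw [abs_sub_comm w' w]; gcongr; exact hΓ t ht w hw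
    _ = (L * ε / (c - r) + Γ / (c - r) ^ 2) * |w - w'| := by ring
    _ ≤ k * |w - w'| := by gcongr

lemma isContractingBox_ratioField
    (hγc : ContinuousOn (fun p : ℝ × ℝ => γ p.1 p.2) (Icc 0 δ ×ˢ Icc 0 δ))
    (hlip : ∀ u ∈ Icc (0:ℝ) δ, ∀ V₁ ∈ Icc (0:ℝ) δ, ∀ V₂ ∈ Icc (0:ℝ) δ,
      |γ u V₂ - γ u V₁| ≤ L * |V₂ - V₁|)
    (hL : 0 ≤ L) {η : ℝ} {k : ℝ≥0} (hk : k < 1) (hr : 0 ≤ r) (hrc : r < c)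
    (hεδ : ε ≤ δ) (hδ : ε * (c + r) ≤ δ) (hfix : ratioField γ σ 0 c = c)
    (hclose : ∀ t ∈ Icc 0 ε, ∀ v ∈ Icc 0 (ε * (c + r)), |γ t v - γ 0 0| ≤ η)
    (hkL : L * ε / (c - r) + (|γ 0 0| + η) / (c - r) ^ 2 ≤ k) (hη : η ≤ c * r * (1 - k)) :
    IsContractingBox (ratioField γ σ) ε (c - r) (c + r) k := by
  have hc : 0 < c := hr.trans_lt hrc
  have hbox (t) (ht : t ∈ Icc 0 ε) (w) (hw : w ∈ Icc (c - r) (c + r)) :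
      t * w ∈ Icc 0 (ε * (c + r)) :=
    ⟨mul_nonneg ht.1 ((sub_pos.2 hrc).le.trans hw.1),
      mul_le_mul ht.2 hw.2 ((sub_pos.2 hrc).le.trans hw.1) (ht.1.trans ht.2)⟩
  have hΓ (t) (ht : t ∈ Icc 0 ε) (w) (hw : w ∈ Icc (c - r) (c + r)) :
      |γ t (t * w)| ≤ |γ 0 0| + η := by
    linarith [abs_sub_abs_le_abs_sub (γ t (t * w)) (γ 0 0), hclose t ht _ (hbox t ht w hw)]
  have hlipOn (t) (ht : t ∈ Icc 0 ε) :=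
    lipschitzOnWith_ratioField (σ := σ) hlip hL hrc hεδ hδ hΓ hkL ht
  refine ⟨continuousOn_ratioField hγc hrc hεδ hδ, fun t ht => ?_, hlipOn, hk⟩
  rw [← Real.closedBall_eq_Icc] at hlipOn ⊢
  refine (hlipOn t ht).mapsTo_closedBall ?_
  rw [Real.dist_eq]
  nth_rewrite 2 [← hfix]
  calc _ = |γ t (t * c) - γ 0 0| / c := by
        rw [ratioField, ratioField, zero_mul, sub_sub_sub_cancel_left, ← sub_div, abs_div,
          abs_of_pos hc, abs_sub_comm]
    _ ≤ η / c := by gcongr; exact hclose t ht _ (hbox t ht c ⟨by linarith, by linarith⟩)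
    _ ≤ (1 - k) * r := by rw [div_le_iff₀ hc]; linarith

lemma exists_forall_Icc_abs_sub_le (hδ : 0 < δ)
    (hγc : ContinuousOn (fun p : ℝ × ℝ => γ p.1 p.2) (Icc 0 δ ×ˢ Icc 0 δ)) {η : ℝ} (hη : 0 < η) :
    ∃ ρ > 0, ρ ≤ δ ∧ ∀ t ∈ Icc 0 ρ, ∀ v ∈ Icc 0 ρ, |γ t v - γ 0 0| ≤ η := by
  obtain ⟨ρ, hρ, h⟩ := Metric.continuousWithinAt_iff.1
    (hγc (0, 0) ⟨left_mem_Icc.2 hδ.le, left_mem_Icc.2 hδ.le⟩) η hη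
  have hsmall : min (ρ / 2) δ < ρ := (min_le_left _ _).trans_lt (half_lt_self hρ)
  refine ⟨min (ρ / 2) δ, by positivity, min_le_right _ _, fun t ht v hv => ?_⟩
  have hmem : (t, v) ∈ Icc 0 δ ×ˢ Icc 0 δ :=
    ⟨⟨ht.1, ht.2.trans (min_le_right _ _)⟩, ⟨hv.1, hv.2.trans (min_le_right _ _)⟩⟩
  have hdist : dist (t, v) (0, 0) < ρ := by
    rw [Prod.dist_eq, Real.dist_eq, Real.dist_eq, sub_zero, sub_zero, abs_of_nonneg ht.1,
      abs_of_nonneg hv.1]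
    exact max_lt (ht.2.trans_lt hsmall) (hv.2.trans_lt hsmall)
  exact (Real.dist_eq _ _ ▸ h hmem hdist).le

lemma exists_isContractingBox_ratioField (hδ : 0 < δ)
    (hγc : ContinuousOn (fun p : ℝ × ℝ => γ p.1 p.2) (Icc 0 δ ×ˢ Icc 0 δ))
    (hlip : ∀ u ∈ Icc (0:ℝ) δ, ∀ V₁ ∈ Icc (0:ℝ) δ, ∀ V₂ ∈ Icc (0:ℝ) δ,
      |γ u V₂ - γ u V₁| ≤ L * |V₂ - V₁|)
    (hL : 0 ≤ L) (hc : 0 < c) (hfix : ratioField γ σ 0 c = c)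
    (hgap : |γ 0 0| < c ^ 2) :
    ∃ ε r : ℝ, ∃ k : ℝ≥0, 0 < ε ∧ ε ≤ δ ∧ 0 < r ∧ r < c ∧ ε * (c + r) ≤ δ ∧
      IsContractingBox (ratioField γ σ) ε (c - r) (c + r) k := by
  obtain ⟨k, hk0, hk1⟩ := exists_between ((div_lt_one (pow_pos hc 2)).2 hgap)
  lift k to ℝ≥0 using (by positivity : 0 ≤ |γ 0 0| / c ^ 2).trans hk0.le
  -- With `η = c r (1 - k)` as the allowed deviation of `γ` from `γ 0 0`, the quotient below bounds
  -- the Lipschitz constant of `w ↦ γ t (t w) / w` on `[c - r, c + r]` up to an `O(ε)` term.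
  have hr_ev : ∀ᶠ r in 𝓝 (0:ℝ), r < c ∧ (|γ 0 0| + c * r * (1 - k)) / (c - r) ^ 2 < k := by
    have hlim : Tendsto (fun r : ℝ => (|γ 0 0| + c * r * (1 - k)) / (c - r) ^ 2) (𝓝 0)
        (𝓝 (|γ 0 0| / c ^ 2)) := by
      simpa using (ContinuousAt.tendsto (x := 0)
        (f := fun r : ℝ => (|γ 0 0| + c * r * (1 - k)) / (c - r) ^ 2)
        (by fun_prop (disch := simp [hc.ne'])))
    exact (eventually_lt_nhds hc).and (hlim.eventually (gt_mem_nhds hk0))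
  obtain ⟨r, ⟨hrc, hrk⟩, hr : 0 < r⟩ := ((hr_ev.filter_mono (nhdsWithin_le_nhds (s := Ioi 0))).and
    self_mem_nhdsWithin).exists
  obtain ⟨ρ, hρ, hρδ, hclose⟩ := exists_forall_Icc_abs_sub_le hδ hγc
    (mul_pos (mul_pos hc hr) (sub_pos.2 (by exact_mod_cast hk1)) : 0 < c * r * (1 - k))
  have hε_ev : ∀ᶠ ε in 𝓝 (0:ℝ), ε < ρ ∧ ε * (c + r) < ρ ∧
      L * ε / (c - r) < k - (|γ 0 0| + c * r * (1 - k)) / (c - r) ^ 2 := by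
    have h₁ : Tendsto (fun ε : ℝ => ε * (c + r)) (𝓝 0) (𝓝 0) := by
      simpa using (continuous_id.mul_const (c + r)).tendsto 0
    have h₂ : Tendsto (fun ε : ℝ => L * ε / (c - r)) (𝓝 0) (𝓝 0) := by
      simpa using ((continuous_const.mul continuous_id).div_const (c - r)).tendsto (0:ℝ)
    exact (eventually_lt_nhds hρ).and ((h₁.eventually (gt_mem_nhds hρ)).and
      (h₂.eventually (gt_mem_nhds (sub_pos.2 hrk))))
  obtain ⟨ε, ⟨hερ, hεcρ, hεL⟩, hε : 0 < ε⟩ :=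
    ((hε_ev.filter_mono (nhdsWithin_le_nhds (s := Ioi 0))).and self_mem_nhdsWithin).exists
  refine ⟨ε, r, k, hε, hερ.le.trans hρδ, hr, hrc, hεcρ.le.trans hρδ,
    isContractingBox_ratioField hγc hlip hL (by exact_mod_cast hk1) hr.le hrc
      (hερ.le.trans hρδ) (hεcρ.le.trans hρδ) hfix
      (fun t ht v hv => hclose t ⟨ht.1, ht.2.trans hερ.le⟩ v ⟨hv.1, hv.2.trans hεcρ.le⟩)
      (by linarith) le_rfl⟩

lemma IsSingSol.isHomogeneousSol {V : ℝ → ℝ} (hV : IsSingSol δ γ σ ε V) :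
    IsHomogeneousSol (ratioField γ σ) ε V :=
  ⟨hV.1, hV.2.1, fun u hu => ratioField_div γ σ (V u) hu.1.ne' ▸ hV.2.2.2.2 u hu⟩

lemma IsHomogeneousSol.isSingSol {V : ℝ → ℝ} (hV : IsHomogeneousSol (ratioField γ σ) ε V) {a b : ℝ}
    (ha : 0 < a) (hδ : 0 ≤ δ) (hbδ : ε * b ≤ δ) (hW : ∀ u ∈ Ioo 0 ε, V u / u ∈ Icc a b) :
    IsSingSol δ γ σ ε V := by
  have hVu (u) (hu : u ∈ Ioo 0 ε) : V u = u * (V u / u) := (mul_div_cancel₀ _ hu.1.ne').symm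
  refine ⟨hV.1, hV.2.1, fun u hu => ?_, fun u hu => ?_, fun u hu => ?_⟩
  · rcases hu.1.eq_or_lt with rfl | hu0
    · rw [hV.2.1]
      exact left_mem_Icc.2 hδ
    have hu' : u ∈ Ioo 0 ε := ⟨hu0, hu.2⟩
    have hw := hW u hu'
    rw [hVu u hu']
    exact ⟨mul_nonneg hu0.le (ha.le.trans hw.1),
      (mul_le_mul hu.2.le hw.2 (ha.le.trans hw.1) (hu0.le.trans hu.2.le)).trans hbδ⟩
  · rw [hVu u hu]
    exact mul_pos hu.1 (ha.trans_le (hW u hu).1)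
  · rw [← ratioField_div γ σ (V u) hu.1.ne']
    exact hV.2.2 u hu

end RatioField

theorem stmt18_general (δ : ℝ) (hδ : 0 < δ) (γ : ℝ → ℝ → ℝ)
    (hγc : ContinuousOn (fun p : ℝ × ℝ => γ p.1 p.2) (Set.Icc 0 δ ×ˢ Set.Icc 0 δ))
    (L : ℝ) (hL : 0 < L)
    (hlip : ∀ u ∈ Set.Icc (0:ℝ) δ, ∀ V₁ ∈ Set.Icc (0:ℝ) δ, ∀ V₂ ∈ Set.Icc (0:ℝ) δ,
      |γ u V₂ - γ u V₁| ≤ L * |V₂ - V₁|)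
    (σ : ℝ) (hσ : 2 * Real.sqrt (γ 0 0) < σ) :
    (∃ ε : ℝ, 0 < ε ∧ ε ≤ δ ∧ ∃ V : ℝ → ℝ, IsSingSol δ γ σ ε V ∧
      Filter.Tendsto (fun u => V u / u) (nhdsWithin 0 (Set.Ioi 0))
        (nhds ((σ + Real.sqrt (σ ^ 2 - 4 * γ 0 0)) / 2))) ∧
    (∀ ε₁ ε₂ : ℝ, 0 < ε₁ → ε₁ ≤ δ → 0 < ε₂ → ε₂ ≤ δ → ∀ V₁ V₂ : ℝ → ℝ,
      IsSingSol δ γ σ ε₁ V₁ →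
      Filter.Tendsto (fun u => V₁ u / u) (nhdsWithin 0 (Set.Ioi 0))
        (nhds ((σ + Real.sqrt (σ ^ 2 - 4 * γ 0 0)) / 2)) →
      IsSingSol δ γ σ ε₂ V₂ →
      Filter.Tendsto (fun u => V₂ u / u) (nhdsWithin 0 (Set.Ioi 0))
        (nhds ((σ + Real.sqrt (σ ^ 2 - 4 * γ 0 0)) / 2)) →
      ∃ ε3 : ℝ, 0 < ε3 ∧ ∀ u ∈ Set.Ico (0:ℝ) ε3, V₁ u = V₂ u) := by
  set c := (σ + √(σ ^ 2 - 4 * γ 0 0)) / 2 with hc_def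
  obtain ⟨hc, hroot, hgap⟩ := larger_root_spec hσ hc_def
  have hfix : ratioField γ σ 0 c = c := ratioField_zero hc.ne' hroot
  obtain ⟨ε, r, k, hε, hεδ, hr, hrc, hδ', hF⟩ :=
    exists_isContractingBox_ratioField hδ hγc hlip hL.le hc hfix hgap
  have hcmem : c ∈ Icc (c - r) (c + r) := ⟨by linarith, by linarith⟩
  refine ⟨?_, fun ε₁ ε₂ hε₁ _ hε₂ _ V₁ V₂ hS₁ hT₁ hS₂ hT₂ => ?_⟩
  · obtain ⟨V, hV, hW, hlim⟩ := hF.exists_isHomogeneousSol hε hcmem hfix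
    exact ⟨ε, hε, hεδ, V, hV.isSingSol (by linarith) hδ.le hδ' hW, hlim⟩
  · exact hF.exists_eqOn_of_tendsto (Icc_mem_nhds (by linarith) (by linarith)) hε hε₁ hε₂
      hS₁.isHomogeneousSol hS₂.isHomogeneousSol hT₁ hT₂

theorem stmt18 (δ : ℝ) (hδ : 0 < δ) (γ : ℝ → ℝ → ℝ)
    (hγc : ContinuousOn (fun p : ℝ × ℝ => γ p.1 p.2) (Set.Icc 0 δ ×ˢ Set.Icc 0 δ))
    (hγpos : ∀ u ∈ Set.Icc (0:ℝ) δ, ∀ v ∈ Set.Icc (0:ℝ) δ, 0 < γ u v)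
    (L : ℝ) (hL : 0 < L)
    (hlip : ∀ u ∈ Set.Icc (0:ℝ) δ, ∀ V₁ ∈ Set.Icc (0:ℝ) δ, ∀ V₂ ∈ Set.Icc (0:ℝ) δ,
      |γ u V₂ - γ u V₁| ≤ L * |V₂ - V₁|)
    (σ : ℝ) (hσ : 2 * Real.sqrt (γ 0 0) < σ) :
    (∃ ε : ℝ, 0 < ε ∧ ε ≤ δ ∧ ∃ V : ℝ → ℝ, IsSingSol δ γ σ ε V ∧
      Filter.Tendsto (fun u => V u / u) (nhdsWithin 0 (Set.Ioi 0))
        (nhds ((σ + Real.sqrt (σ ^ 2 - 4 * γ 0 0)) / 2))) ∧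
    (∀ ε₁ ε₂ : ℝ, 0 < ε₁ → ε₁ ≤ δ → 0 < ε₂ → ε₂ ≤ δ → ∀ V₁ V₂ : ℝ → ℝ,
      IsSingSol δ γ σ ε₁ V₁ →
      Filter.Tendsto (fun u => V₁ u / u) (nhdsWithin 0 (Set.Ioi 0))
        (nhds ((σ + Real.sqrt (σ ^ 2 - 4 * γ 0 0)) / 2)) →
      IsSingSol δ γ σ ε₂ V₂ →
      Filter.Tendsto (fun u => V₂ u / u) (nhdsWithin 0 (Set.Ioi 0))
        (nhds ((σ + Real.sqrt (σ ^ 2 - 4 * γ 0 0)) / 2)) →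
      ∃ ε3 : ℝ, 0 < ε3 ∧ ∀ u ∈ Set.Ico (0:ℝ) ε3, V₁ u = V₂ u) :=
  stmt18_general δ hδ γ hγc L hL hlip σ hσ
end
end
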